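/- (Proposition 2, PPV of the new test) Under assumptions (A1), (A2), (A4) and the testing logic, the new test's positive predictive value PPV_z := P(x=1|z=1,t=1) satisfies PPV_z ∈ [ max{ P(y=1|z=1,t=1), 1 − (1−χ̄)/ζ } , min{ 1, P(y=1|z=1,t=1) + χ̄(1−σ)/ζ } ], where χ̄ = γ/σ; these bounds are sharp (each endpoint is attained by a distribution consistent with the data), and they coincide with the four-case expressions: lower bound P(y=1|z=1,t=1) and upper bound 1 in case (C), lower P(y=1|z=1,t=1) and upper P(y=1|z=1,t=1)+χ̄(1−σ)/ζ in case (I), lower 1−(1−χ̄)/ζ and upper 1 in case (U), and lower 1−(1−χ̄)/ζ and upper P(y=1|z=1,t=1)+χ̄(1−σ)/ζ in case (X). -/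

import Mathlib

/-!
Population model: a pmf `P` on `{0,1}^4` over `(x, y, z, t)` where `x = true` means truly
infected, `y` is the established test result, `z` the new test result, and `t = true` means
the person belongs to the testing pool.  The testing logic requires `z = 1 → t = 1`.
-/

namespace PaperTest

abbrev Dist := Bool → Bool → Bool → Bool → ℝ

/-- Probability of the event `A` under `P`. -/
noncomputable def pr (P : Dist) (A : Bool → Bool → Bool → Bool → Bool) : ℝ :=
  ∑ x : Bool, ∑ y : Bool, ∑ z : Bool, ∑ t : Bool, if A x y z t then P x y z t else 0

/-- Conditional probability `P(A | B)`. -/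
noncomputable def cpr (P : Dist) (A B : Bool → Bool → Bool → Bool → Bool) : ℝ :=
  pr P (fun x y z t => A x y z t && B x y z t) / pr P B

def IsPMF (P : Dist) : Prop :=
  (∀ x y z t, 0 ≤ P x y z t) ∧
    (∑ x : Bool, ∑ y : Bool, ∑ z : Bool, ∑ t : Bool, P x y z t) = 1

/-- Testing logic: `z = 1` implies `t = 1`, i.e. there is no mass on `z = 1 ∧ t = 0`. -/
def TestLogic (P : Dist) : Prop := ∀ x y, P x y true false = 0

/-- Prevalence `p = P(x=1)`. -/
noncomputable def prev (P : Dist) : ℝ := pr P fun x _ _ _ => x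

/-- Sensitivity of the established test, `σ = P(y=1 | x=1)`. -/
noncomputable def sens (P : Dist) : ℝ := cpr P (fun _ y _ _ => y) (fun x _ _ _ => x)

/-- `τ = P(t=1)`. -/
noncomputable def tau (P : Dist) : ℝ := pr P fun _ _ _ t => t

/-- `γ = P(y=1 | t=1)`. -/
noncomputable def gamma (P : Dist) : ℝ := cpr P (fun _ y _ _ => y) (fun _ _ _ t => t)

/-- `ζ = P(z=1 | t=1)`. -/
noncomputable def zeta (P : Dist) : ℝ := cpr P (fun _ _ z _ => z) (fun _ _ _ t => t)

/-- `χ̄ = γ/σ`, the prevalence in the testing pool. -/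
noncomputable def chibar (P : Dist) : ℝ := gamma P / sens P

/-- (A1) non-trivial prevalence. -/
def A1 (P : Dist) : Prop := 0 < prev P ∧ prev P < 1

/-- (A2) no false positives for the established test: `P(x=0, y=1) = 0`. -/
def A2 (P : Dist) : Prop := pr P (fun x y _ _ => !x && y) = 0

/-- (A3) test monotonicity: `P(x=1 | t=1) ≥ P(x=1 | t=0)`. -/
def A3 (P : Dist) : Prop :=
  cpr P (fun x _ _ _ => x) (fun _ _ _ t => t) ≥ cpr P (fun x _ _ _ => x) (fun _ _ _ t => !t)

/-- (A4) health sufficiency: `P(y=1 | x=1, t=1) = P(y=1 | x=1) = σ`. -/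
def A4 (P : Dist) : Prop := cpr P (fun _ y _ _ => y) (fun x _ _ t => x && t) = sens P

/-- `P(y=1, z=1 | t=1)`. -/
noncomputable def q11 (P : Dist) : ℝ := cpr P (fun _ y z _ => y && z) (fun _ _ _ t => t)

/-- `P(y=1, z=0 | t=1)`. -/
noncomputable def q10 (P : Dist) : ℝ := cpr P (fun _ y z _ => y && !z) (fun _ _ _ t => t)

/-- `P(y=0, z=1 | t=1)`. -/
noncomputable def q01 (P : Dist) : ℝ := cpr P (fun _ y z _ => !y && z) (fun _ _ _ t => t)

/-- `P(y=0, z=0 | t=1)`. -/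
noncomputable def q00 (P : Dist) : ℝ := cpr P (fun _ y z _ => !y && !z) (fun _ _ _ t => t)

/-- `Q` induces the same conditional data distribution `P(y, z | t=1)` and the same
sensitivity `σ` of the established test as `P`. -/
def SameData (P Q : Dist) : Prop :=
  (∀ y0 z0 : Bool,
      cpr Q (fun _ y z _ => (y == y0) && (z == z0)) (fun _ _ _ t => t) =
        cpr P (fun _ y z _ => (y == y0) && (z == z0)) (fun _ _ _ t => t)) ∧
    sens Q = sens P

/-- Assumptions (A1), (A2), (A4), the testing logic, and the maintained regularity
conditions `γ, ζ > 0`, `P(t=1) > 0`, and `γ < σ ≤ 1`. -/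
def Setup (P : Dist) : Prop :=
  IsPMF P ∧ TestLogic P ∧ A1 P ∧ A2 P ∧ A4 P ∧
    0 < gamma P ∧ 0 < zeta P ∧ 0 < tau P ∧ gamma P < sens P ∧ sens P ≤ 1

/-- `Q` is consistent with the data of `P`: it satisfies all assumptions and induces the
same `P(y, z | t=1)` and the same `σ`. -/
def Consistent (P Q : Dist) : Prop := Setup Q ∧ SameData P Q

/-- The new test's positive predictive value `PPV_z = P(x=1 | z=1, t=1)`. -/
noncomputable def ppvZ (P : Dist) : ℝ := cpr P (fun x _ _ _ => x) (fun _ _ z t => z && t)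

/-- `P(y=1 | z=1, t=1)`. -/
noncomputable def pyGz (P : Dist) : ℝ := cpr P (fun _ y _ _ => y) (fun _ _ z t => z && t)

/-- Case (C), confirmatory. -/
def CaseC (P : Dist) : Prop := q00 P ≥ max (chibar P * (1 - sens P)) (1 - chibar P)

/-- Case (I), informative. -/
def CaseI (P : Dist) : Prop := 1 - chibar P > q00 P ∧ q00 P ≥ chibar P * (1 - sens P)

/-- Case (U), uninformative. -/
def CaseU (P : Dist) : Prop := chibar P * (1 - sens P) > q00 P ∧ q00 P ≥ 1 - chibar P

/-- Case (X), contradictory. -/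
def CaseX (P : Dist) : Prop := min (chibar P * (1 - sens P)) (1 - chibar P) > q00 P

section Helpers

lemma pr_congr (P : Dist) {A B : Bool → Bool → Bool → Bool → Bool}
    (h : ∀ x y z t, A x y z t = B x y z t) : pr P A = pr P B := by
  unfold pr; congr 1 with x; congr 1 with y; congr 1 with z; congr 1 with t; rw [h]

lemma pr_nonneg (P : Dist) (hp : ∀ x y z t, 0 ≤ P x y z t)
    (A : Bool → Bool → Bool → Bool → Bool) : 0 ≤ pr P A := by
  refine Finset.sum_nonneg fun x _ => Finset.sum_nonneg fun y _ =>
    Finset.sum_nonneg fun z _ => Finset.sum_nonneg fun t _ => ?_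
  split <;> simp [hp]

lemma keyP (P : Dist) (h : Setup P) :
    0 ≤ q11 P ∧ 0 ≤ q10 P ∧ 0 ≤ q01 P ∧ 0 ≤ q00 P ∧
    q11 P + q10 P + q01 P + q00 P = 1 ∧
    gamma P = q11 P + q10 P ∧ zeta P = q11 P + q01 P ∧
    pyGz P = q11 P / zeta P ∧
    0 < sens P ∧ chibar P * sens P = gamma P ∧ 0 < chibar P ∧ chibar P < 1 := by
  obtain ⟨⟨hpos, hsum⟩, hTL, hA1, hA2, hA4, hγ, hζ, hτ, hγσ, hσ1⟩ := h
  have hT : (0:ℝ) < pr P (fun _ _ _ t => t) := hτ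
  have hTne : pr P (fun _ _ _ t => t) ≠ 0 := hT.ne'
  have hσ : 0 < sens P := lt_trans hγ hγσ
  have hq11 : 0 ≤ q11 P := div_nonneg (pr_nonneg P hpos _) hT.le
  have hq10 : 0 ≤ q10 P := div_nonneg (pr_nonneg P hpos _) hT.le
  have hq01 : 0 ≤ q01 P := div_nonneg (pr_nonneg P hpos _) hT.le
  have hq00 : 0 ≤ q00 P := div_nonneg (pr_nonneg P hpos _) hT.le
  have hsum1 : q11 P + q10 P + q01 P + q00 P = 1 := by
    unfold q11 q10 q01 q00 cpr
    rw [← add_div, ← add_div, ← add_div, div_eq_one_iff_eq hTne]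
    simp [pr, Fintype.sum_bool]; ring
  have hgam : gamma P = q11 P + q10 P := by
    unfold gamma q11 q10 cpr
    rw [← add_div]
    congr 1
    simp [pr, Fintype.sum_bool]; ring
  have hzet : zeta P = q11 P + q01 P := by
    unfold zeta q11 q01 cpr
    rw [← add_div]
    congr 1
    simp [pr, Fintype.sum_bool]; ring
  have hzt : pr P (fun _ _ z t => z && t) = zeta P * pr P (fun _ _ _ t => t) := by
    unfold zeta cpr
    rw [div_mul_cancel₀ _ hTne]
  have hpy : pyGz P = q11 P / zeta P := by
    unfold pyGz q11 cpr
    rw [hzt, div_div, mul_comm (zeta P)]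
    congr 1
  refine ⟨hq11, hq10, hq01, hq00, hsum1, hgam, hzet, hpy, hσ, ?_, ?_, ?_⟩
  · exact div_mul_cancel₀ _ hσ.ne'
  · exact div_pos hγ hσ
  · exact (div_lt_one hσ).2 hγσ

end Helpers


lemma div_div_div_same {a b c : ℝ} (hc : c ≠ 0) : (a/c)/(b/c) = a/b := by
  rcases eq_or_ne b 0 with rb | rb
  · simp [rb]
  · field_simp

lemma ppv_bounds (Q : Dist) (h : Setup Q) :
    max (pyGz Q) (1 - (1 - chibar Q) / zeta Q) ≤ ppvZ Q ∧
    ppvZ Q ≤ min 1 (pyGz Q + chibar Q * (1 - sens Q) / zeta Q) := by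
  obtain ⟨⟨hpos, hsum⟩, hTL, hA1, hA2, hA4, hγ, hζ, hτ, hγσ, hσ1⟩ := h
  have hσ : 0 < sens Q := lt_trans hγ hγσ
  have hT : (0:ℝ) < pr Q (fun _ _ _ t => t) := hτ
  simp [A2, pr, Fintype.sum_bool] at hA2
  have z1 : Q false true true true = 0 := by
    nlinarith [hpos false true true true, hpos false true true false,
      hpos false true false true, hpos false true false false]
  have z2 : Q false true false true = 0 := by
    nlinarith [hpos false true true true, hpos false true true false,
      hpos false true false true, hpos false true false false]
  simp [A4, cpr, pr, Fintype.sum_bool] at hA4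
  have hTau : pr Q (fun _ _ _ t => t) =
      Q true true true true + Q true true false true + Q true false true true +
        Q true false false true + Q false false true true + Q false false false true := by
    simp [pr, Fintype.sum_bool, z1, z2] <;> ring
  have hγe : gamma Q * pr Q (fun _ _ _ t => t) =
      Q true true true true + Q true true false true := by
    unfold gamma cpr
    rw [div_mul_cancel₀ _ hT.ne']
    simp [pr, Fintype.sum_bool, z1, z2] <;> ring
  have hζe : zeta Q * pr Q (fun _ _ _ t => t) =
      Q true true true true + Q true false true true + Q false false true true := by
    unfold zeta cpr
    rw [div_mul_cancel₀ _ hT.ne']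
    simp [pr, Fintype.sum_bool, z1, z2] <;> ring
  have hAB : 0 < Q true true true true + Q true true false true := by
    have := mul_pos hγ hT; rwa [hγe] at this
  have hden : (0:ℝ) < Q true true true true + Q true true false true +
      (Q true false true true + Q true false false true) := by
    nlinarith [hpos true false true true, hpos true false false true]
  have hσe : Q true true true true + Q true true false true =
      sens Q * (Q true true true true + Q true true false true +
        (Q true false true true + Q true false false true)) :=
    (div_eq_iff hden.ne').mp hA4
  have hχσ : chibar Q * sens Q = gamma Q := div_mul_cancel₀ _ hσ.ne'
  have hχe : chibar Q * pr Q (fun _ _ _ t => t) =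
      Q true true true true + Q true true false true +
        (Q true false true true + Q true false false true) := by
    have h1 : sens Q * (chibar Q * pr Q (fun _ _ _ t => t)) =
        sens Q * (Q true true true true + Q true true false true +
          (Q true false true true + Q true false false true)) := by
      rw [← mul_assoc, mul_comm (sens Q) (chibar Q), hχσ, hγe]; exact hσe
    exact mul_left_cancel₀ hσ.ne' h1
  have hD : 0 < Q true true true true + Q true false true true + Q false false true true := by
    have := mul_pos hζ hT; rwa [hζe] at this
  have hppv : ppvZ Q = (Q true true true true + Q true false true true) /
      (Q true true true true + Q true false true true + Q false false true true) := by
    unfold ppvZ cpr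
    congr 1 <;> · simp [pr, Fintype.sum_bool, z1, z2] <;> ring
  have hpy : pyGz Q = Q true true true true /
      (Q true true true true + Q true false true true + Q false false true true) := by
    unfold pyGz cpr
    congr 1 <;> · simp [pr, Fintype.sum_bool, z1, z2] <;> ring
  have hχ' : chibar Q = (Q true true true true + Q true true false true +
      (Q true false true true + Q true false false true)) / pr Q (fun _ _ _ t => t) := by
    rw [eq_div_iff hT.ne']; exact hχe
  have hζ' : zeta Q = (Q true true true true + Q true false true true + Q false false true true) /
      pr Q (fun _ _ _ t => t) := by
    rw [eq_div_iff hT.ne']; exact hζe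
  have hγ' : gamma Q = (Q true true true true + Q true true false true) /
      pr Q (fun _ _ _ t => t) := by
    rw [eq_div_iff hT.ne']; exact hγe
  have key1 : (1 - chibar Q) / zeta Q =
      (Q false false true true + Q false false false true) /
        (Q true true true true + Q true false true true + Q false false true true) := by
    have h1 : 1 - chibar Q = (Q false false true true + Q false false false true) /
        pr Q (fun _ _ _ t => t) := by
      rw [eq_div_iff hT.ne', sub_mul, one_mul, hχe]; linarith [hTau]
    rw [h1, hζ', div_div_div_same hT.ne']
  have key2 : chibar Q * (1 - sens Q) / zeta Q =
      (Q true false true true + Q true false false true) /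
        (Q true true true true + Q true false true true + Q false false true true) := by
    have h1 : chibar Q * (1 - sens Q) =
        (Q true false true true + Q true false false true) / pr Q (fun _ _ _ t => t) := by
      rw [eq_div_iff hT.ne', mul_one_sub, sub_mul, hχσ, hχe, hγe]
      ring
    rw [h1, hζ', div_div_div_same hT.ne']
  constructor
  · rw [max_le_iff]
    constructor
    · rw [hpy, hppv]
      gcongr <;> linarith [hpos true false true true, hD]
    · rw [key1, hppv, sub_le_iff_le_add, ← add_div, le_div_iff₀ hD]
      linarith [hpos false false false true]
  · rw [le_min_iff]
    constructor
    · rw [hppv, div_le_one hD]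
      linarith [hpos false false true true]
    · rw [key2, hppv, hpy, ← add_div]
      gcongr <;> linarith [hpos true false false true, hD]

lemma cpr_congrA (P : Dist) {A A' B : Bool → Bool → Bool → Bool → Bool}
    (h : ∀ x y z t, A x y z t = A' x y z t) : cpr P A B = cpr P A' B := by
  unfold cpr; congr 1; exact pr_congr P (by intro x y z t; rw [h])

lemma q11_beq (R : Dist) :
    cpr R (fun _ y z _ => (y == true) && (z == true)) (fun _ _ _ t => t) = q11 R :=
  cpr_congrA R (by decide)

lemma q10_beq (R : Dist) :
    cpr R (fun _ y z _ => (y == true) && (z == false)) (fun _ _ _ t => t) = q10 R :=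
  cpr_congrA R (by decide)

lemma q01_beq (R : Dist) :
    cpr R (fun _ y z _ => (y == false) && (z == true)) (fun _ _ _ t => t) = q01 R :=
  cpr_congrA R (by decide)

lemma q00_beq (R : Dist) :
    cpr R (fun _ y z _ => (y == false) && (z == false)) (fun _ _ _ t => t) = q00 R :=
  cpr_congrA R (by decide)

lemma sameData_q (P Q : Dist) (hS : SameData P Q) :
    q11 Q = q11 P ∧ q10 Q = q10 P ∧ q01 Q = q01 P ∧ q00 Q = q00 P := by
  refine ⟨?_, ?_, ?_, ?_⟩
  · have := hS.1 true true; rwa [q11_beq, q11_beq] at this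
  · have := hS.1 true false; rwa [q10_beq, q10_beq] at this
  · have := hS.1 false true; rwa [q01_beq, q01_beq] at this
  · have := hS.1 false false; rwa [q00_beq, q00_beq] at this

lemma transfer (P Q : Dist) (hP : Setup P) (hQ : Setup Q) (hS : SameData P Q) :
    pyGz Q = pyGz P ∧ chibar Q = chibar P ∧ zeta Q = zeta P ∧ sens Q = sens P := by
  obtain ⟨e11, e10, e01, e00⟩ := sameData_q P Q hS
  obtain ⟨_, _, _, _, _, _, hzetP, hpyP, _, _, _, _⟩ := keyP P hP
  obtain ⟨_, _, _, _, _, hgamQ, hzetQ, hpyQ, _, _, _, _⟩ := keyP Q hQ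
  obtain ⟨_, _, _, _, _, hgamP, _, _, _, _, _, _⟩ := keyP P hP
  have hz : zeta Q = zeta P := by rw [hzetQ, hzetP, e11, e01]
  have hg : gamma Q = gamma P := by rw [hgamQ, hgamP, e11, e10]
  have hs : sens Q = sens P := hS.2
  refine ⟨?_, ?_, hz, hs⟩
  · rw [hpyQ, hpyP, e11, hz]
  · unfold chibar; rw [hg, hs]

lemma q11_val (R : Dist) :
    q11 R = pr R (fun _ y z t => y && z && t) / pr R (fun _ _ _ t => t) := by
  unfold q11 cpr
  congr 1
lemma q10_val (R : Dist) :
    q10 R = pr R (fun _ y z t => y && !z && t) / pr R (fun _ _ _ t => t) := by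
  unfold q10 cpr
  congr 1
lemma q01_val (R : Dist) :
    q01 R = pr R (fun _ y z t => !y && z && t) / pr R (fun _ _ _ t => t) := by
  unfold q01 cpr
  congr 1
lemma q00_val (R : Dist) :
    q00 R = pr R (fun _ y z t => !y && !z && t) / pr R (fun _ _ _ t => t) := by
  unfold q00 cpr
  congr 1
lemma gamma_val (R : Dist) :
    gamma R = pr R (fun _ y _ t => y && t) / pr R (fun _ _ _ t => t) := by
  unfold gamma cpr
  congr 1
lemma zeta_val (R : Dist) :
    zeta R = pr R (fun _ _ z t => z && t) / pr R (fun _ _ _ t => t) := by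
  unfold zeta cpr
  congr 1
lemma sens_val (R : Dist) :
    sens R = pr R (fun x y _ _ => y && x) / pr R (fun x _ _ _ => x) := by
  unfold sens cpr
  congr 1
lemma ppvZ_val (R : Dist) :
    ppvZ R = pr R (fun x _ z t => x && (z && t)) / pr R (fun _ _ z t => z && t) := by
  unfold ppvZ cpr
  congr 1

/-- The family of distributions used to prove sharpness. -/
noncomputable def mkQ (P : Dist) (m : ℝ) : Dist := fun x y z t =>
  if t then
    (if x then
        (if y then (if z then q11 P else q10 P)
         else (if z then m else chibar P - gamma P - m))
      else
        (if y then 0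
         else (if z then q01 P - m else q00 P - (chibar P - gamma P - m)))) / 2
  else if x || y || z then 0 else 1/2

lemma mkQ_good (P : Dist) (h : Setup P) (m : ℝ)
    (hm0 : 0 ≤ m) (hm1 : m ≤ q01 P) (hm2 : m ≤ chibar P - gamma P)
    (hm3 : chibar P - gamma P - m ≤ q00 P) :
    Consistent P (mkQ P m) ∧ ppvZ (mkQ P m) = (q11 P + m) / zeta P := by
  obtain ⟨hq11, hq10, hq01, hq00, hsum1, hgam, hzet, hpy, hσpos, hχσ, hχpos, hχlt1⟩ := keyP P h
  obtain ⟨-, -, -, -, -, hγP, hζP, hτP, hγσP, hσ1P⟩ := id h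
  have half_ne : (1/2 : ℝ) ≠ 0 := by norm_num
  have htau : pr (mkQ P m) (fun _ _ _ t => t) = 1/2 := by
    simp [mkQ, pr, Fintype.sum_bool]; linarith
  have hx : pr (mkQ P m) (fun x _ _ _ => x) = chibar P / 2 := by
    simp [mkQ, pr, Fintype.sum_bool]; linarith
  have hxpos : (0:ℝ) < chibar P / 2 := by linarith
  have hsR : sens (mkQ P m) = sens P := by
    rw [sens_val, hx, div_eq_iff hxpos.ne']
    simp [mkQ, pr, Fintype.sum_bool]
    linear_combination (-1/2 : ℝ) * hχσ - (1/2 : ℝ) * hgam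
  have hgamR : gamma (mkQ P m) = gamma P := by
    rw [gamma_val, htau, div_eq_iff half_ne]
    simp [mkQ, pr, Fintype.sum_bool]; linarith
  have hzetR : zeta (mkQ P m) = zeta P := by
    rw [zeta_val, htau, div_eq_iff half_ne]
    simp [mkQ, pr, Fintype.sum_bool]; linarith
  have htauR : tau (mkQ P m) = 1/2 := htau
  have hA4R : A4 (mkQ P m) := by
    unfold A4
    rw [hsR]
    unfold cpr
    have hxt : pr (mkQ P m) (fun x _ _ t => x && t) = chibar P / 2 := by
      simp [mkQ, pr, Fintype.sum_bool]; linarith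
    rw [hxt, div_eq_iff hxpos.ne']
    simp [mkQ, pr, Fintype.sum_bool]
    linear_combination (-1/2 : ℝ) * hχσ - (1/2 : ℝ) * hgam
  have hq11R : q11 (mkQ P m) = q11 P := by
    rw [q11_val, htau, div_eq_iff half_ne]
    simp [mkQ, pr, Fintype.sum_bool]; linarith
  have hq10R : q10 (mkQ P m) = q10 P := by
    rw [q10_val, htau, div_eq_iff half_ne]
    simp [mkQ, pr, Fintype.sum_bool]; linarith
  have hq01R : q01 (mkQ P m) = q01 P := by
    rw [q01_val, htau, div_eq_iff half_ne]
    simp [mkQ, pr, Fintype.sum_bool]; linarith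
  have hq00R : q00 (mkQ P m) = q00 P := by
    rw [q00_val, htau, div_eq_iff half_ne]
    simp [mkQ, pr, Fintype.sum_bool]; linarith
  have hSetup : Setup (mkQ P m) := by
    refine ⟨⟨?_, ?_⟩, ?_, ?_, ?_, hA4R, ?_, ?_, ?_, ?_, ?_⟩
    · intro x y z t
      cases x <;> cases y <;> cases z <;> cases t <;> simp [mkQ] <;> linarith
    · simp [mkQ, Fintype.sum_bool]; linarith
    · intro x y; cases x <;> cases y <;> simp [mkQ]
    · constructor
      · unfold prev; rw [hx]; linarith
      · unfold prev; rw [hx]; linarith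
    · unfold A2; simp [mkQ, pr, Fintype.sum_bool]
    · rw [hgamR]; exact hγP
    · rw [hzetR]; exact hζP
    · rw [htauR]; norm_num
    · rw [hgamR, hsR]; exact hγσP
    · rw [hsR]; exact hσ1P
  have hSame : SameData P (mkQ P m) := by
    constructor
    · intro y0 z0
      cases y0 <;> cases z0
      · rw [q00_beq, q00_beq, hq00R]
      · rw [q01_beq, q01_beq, hq01R]
      · rw [q10_beq, q10_beq, hq10R]
      · rw [q11_beq, q11_beq, hq11R]
    · exact hsR
  have hzpos : 0 < q11 P + q01 P := by rw [← hzet]; exact hζP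
  have hppvR : ppvZ (mkQ P m) = (q11 P + m) / zeta P := by
    have hzt : pr (mkQ P m) (fun _ _ z t => z && t) = (q11 P + q01 P)/2 := by
      simp [mkQ, pr, Fintype.sum_bool]; linarith
    rw [ppvZ_val, hzt, hzet,
      div_eq_div_iff (div_ne_zero hzpos.ne' two_ne_zero) hzpos.ne']
    simp [mkQ, pr, Fintype.sum_bool]
    ring
  exact ⟨⟨hSetup, hSame⟩, hppvR⟩


lemma div_le_div_same' {a b d : ℝ} (hab : a ≤ b) (hd : 0 < d) : a/d ≤ b/d := by
  have := mul_le_mul_of_nonneg_right hab (inv_nonneg.mpr hd.le)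
  simpa [div_eq_mul_inv] using this

/-- Proposition 2, PPV of the new test: the new test's positive predictive
value satisfies `PPV_z ∈ [max{P(y=1|z=1,t=1), 1−(1−χ̄)/ζ}, min{1, P(y=1|z=1,t=1)+χ̄(1−σ)/ζ}]`,
these bounds are sharp, and they coincide with the four-case expressions of the paper. -/
theorem statement5 (P : Dist) (h : Setup P) :
    (∀ Q : Dist, Consistent P Q →
      ppvZ Q ∈ Set.Icc (max (pyGz P) (1 - (1 - chibar P) / zeta P))
        (min 1 (pyGz P + chibar P * (1 - sens P) / zeta P))) ∧
    (∃ Q : Dist, Consistent P Q ∧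
      ppvZ Q = max (pyGz P) (1 - (1 - chibar P) / zeta P)) ∧
    (∃ Q : Dist, Consistent P Q ∧
      ppvZ Q = min 1 (pyGz P + chibar P * (1 - sens P) / zeta P)) ∧
    (CaseC P → max (pyGz P) (1 - (1 - chibar P) / zeta P) = pyGz P ∧
      min 1 (pyGz P + chibar P * (1 - sens P) / zeta P) = 1) ∧
    (CaseI P → max (pyGz P) (1 - (1 - chibar P) / zeta P) = pyGz P ∧
      min 1 (pyGz P + chibar P * (1 - sens P) / zeta P) =
        pyGz P + chibar P * (1 - sens P) / zeta P) ∧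
    (CaseU P → max (pyGz P) (1 - (1 - chibar P) / zeta P) = 1 - (1 - chibar P) / zeta P ∧
      min 1 (pyGz P + chibar P * (1 - sens P) / zeta P) = 1) ∧
    (CaseX P → max (pyGz P) (1 - (1 - chibar P) / zeta P) = 1 - (1 - chibar P) / zeta P ∧
      min 1 (pyGz P + chibar P * (1 - sens P) / zeta P) =
        pyGz P + chibar P * (1 - sens P) / zeta P) := by
  obtain ⟨hq11, hq10, hq01, hq00, hsum1, hgam, hzet, hpy, hσpos, hχσ, hχpos, hχlt1⟩ := keyP P h
  obtain ⟨-, -, -, -, -, hγP, hζP, hτP, hγσP, hσ1P⟩ := id h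
  have hc : chibar P * (1 - sens P) = chibar P - gamma P := by rw [mul_one_sub, hχσ]
  have hcnn : 0 ≤ chibar P - gamma P := by
    rw [← hc]; exact mul_nonneg hχpos.le (by linarith)
  have e1 : 1 - (1 - chibar P) / zeta P
      = (q11 P + (chibar P - gamma P - q00 P)) / zeta P := by
    rw [eq_div_iff hζP.ne', sub_mul, one_mul, div_mul_cancel₀ _ hζP.ne']
    linarith [hzet, hsum1, hgam]
  have e2 : pyGz P + chibar P * (1 - sens P) / zeta P
      = (q11 P + (chibar P - gamma P)) / zeta P := by
    rw [hpy, hc, ← add_div]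
  have e3 : (1:ℝ) = (q11 P + q01 P) / zeta P := by
    rw [← hzet, div_self hζP.ne']
  have elow : max (pyGz P) (1 - (1 - chibar P) / zeta P)
      = (q11 P + max 0 (chibar P - gamma P - q00 P)) / zeta P := by
    rw [hpy, e1]
    rcases le_total (chibar P - gamma P - q00 P) 0 with hh | hh
    · rw [max_eq_left hh, max_eq_left (div_le_div_same' (by linarith) hζP), add_zero]
    · rw [max_eq_right hh, max_eq_right (div_le_div_same' (by linarith) hζP)]
  have ehigh : min 1 (pyGz P + chibar P * (1 - sens P) / zeta P)
      = (q11 P + min (q01 P) (chibar P - gamma P)) / zeta P := by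
    rw [e2, e3]
    rcases le_total (q01 P) (chibar P - gamma P) with hh | hh
    · rw [min_eq_left (div_le_div_same' (by linarith) hζP), min_eq_left hh]
    · rw [min_eq_right (div_le_div_same' (by linarith) hζP), min_eq_right hh]
  refine ⟨?_, ?_, ?_, ?_, ?_, ?_, ?_⟩
  · intro Q hQ
    obtain ⟨hQs, hQd⟩ := hQ
    obtain ⟨tpy, tχ, tζ, tσ⟩ := transfer P Q h hQs hQd
    have hb := ppv_bounds Q hQs
    rw [Set.mem_Icc, ← tpy, ← tχ, ← tζ, ← tσ]
    exact hb
  · obtain ⟨hcons, hval⟩ := mkQ_good P h (max 0 (chibar P - gamma P - q00 P))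
      (le_max_left _ _)
      (max_le hq01 (by linarith))
      (max_le hcnn (by linarith))
      (by linarith [le_max_right 0 (chibar P - gamma P - q00 P)])
    exact ⟨_, hcons, by rw [hval, elow]⟩
  · obtain ⟨hcons, hval⟩ := mkQ_good P h (min (q01 P) (chibar P - gamma P))
      (le_min hq01 hcnn)
      (min_le_left _ _)
      (min_le_right _ _)
      (by rcases min_cases (q01 P) (chibar P - gamma P) with ⟨hmin, _⟩ | ⟨hmin, _⟩ <;>
        rw [hmin] <;> linarith)
    exact ⟨_, hcons, by rw [hval, ehigh]⟩
  · intro hC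
    unfold CaseC at hC
    rw [hc] at hC
    have h1 : chibar P - gamma P ≤ q00 P := le_trans (le_max_left _ _) hC
    have h2 : 1 - chibar P ≤ q00 P := le_trans (le_max_right _ _) hC
    constructor
    · apply max_eq_left
      rw [e1, hpy]; exact div_le_div_same' (by linarith) hζP
    · apply min_eq_left
      rw [e2, le_div_iff₀ hζP, one_mul]; linarith
  · intro hI
    obtain ⟨h2, h1⟩ := hI
    rw [hc] at h1
    constructor
    · apply max_eq_left
      rw [e1, hpy]; exact div_le_div_same' (by linarith) hζP
    · apply min_eq_right
      rw [e2, div_le_one hζP]; linarith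
  · intro hU
    obtain ⟨h1, h2⟩ := hU
    rw [hc] at h1
    constructor
    · apply max_eq_right
      rw [e1, hpy]; exact div_le_div_same' (by linarith) hζP
    · apply min_eq_left
      rw [e2, le_div_iff₀ hζP, one_mul]; linarith
  · intro hX
    unfold CaseX at hX
    rw [hc] at hX
    have h1 : q00 P < chibar P - gamma P := lt_of_lt_of_le hX (min_le_left _ _)
    have h2 : q00 P < 1 - chibar P := lt_of_lt_of_le hX (min_le_right _ _)
    constructor
    · apply max_eq_right
      rw [e1, hpy]; exact div_le_div_same' (by linarith) hζP
    · apply min_eq_right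
      rw [e2, div_le_one hζP]; linarith

end PaperTest
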